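/- Let R be a ring with a complete family of pairwise orthogonal idempotents (e_i)_{i∈I} (a ring with enough idempotents, R = ⊕_i Re_i = ⊕_i e_iR). If the category of unitary left R-modules is locally coherent, then a finitely presented unitary left R-module X is a simple object in the category of finitely presented unitary left R-modules (i.e., has no nonzero proper finitely presented submodules) if and only if X is a simple R-module. -/

import Mathlib

noncomputable section

universe u

variable (R : Type u) [NonUnitalRing R]

/-- A left module over a non-unital ring `R`. -/
class LeftRMod (M : Type u) [AddCommGroup M] extends SMul R M where
  smul_add : ∀ (r : R) (m n : M), r • (m + n) = r • m + r • n
  add_smul : ∀ (r s : R) (m : M), (r + s) • m = r • m + s • m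
  mul_smul : ∀ (r s : R) (m : M), (r * s) • m = r • (s • m)

/-- `R` is a left module over itself by multiplication. -/
instance : LeftRMod R R where
  toSMul := inferInstance
  smul_add := mul_add
  add_smul := add_mul
  mul_smul := mul_assoc

/-- A module `M` is unitary if `RM = M`, i.e. every element is a finite sum `Σ rᵢ • xᵢ`. -/
def IsUnitary (M : Type u) [AddCommGroup M] [LeftRMod R M] : Prop :=
  ∀ m : M, ∃ (n : ℕ) (r : Fin n → R) (x : Fin n → M), m = ∑ i, r i • x i

/-- A subset of a module which is a submodule. -/
def IsSubMod {M : Type u} [AddCommGroup M] [LeftRMod R M] (S : Set M) : Prop :=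
  (0 : M) ∈ S ∧ (∀ a ∈ S, ∀ b ∈ S, a + b ∈ S) ∧ (∀ a ∈ S, -a ∈ S) ∧
    ∀ (r : R), ∀ a ∈ S, r • a ∈ S

/-- `R`-linear maps between modules over the non-unital ring `R`. -/
structure RLin (M N : Type u) [AddCommGroup M] [LeftRMod R M]
    [AddCommGroup N] [LeftRMod R N] where
  toFun : M → N
  map_add : ∀ a b, toFun (a + b) = toFun a + toFun b
  map_smul : ∀ (r : R) (a : M), toFun (r • a) = r • toFun a

/-- The principal left ideal `Re` of `R`, as a type. -/
def ReT (e : R) : Type u := {x : R // ∃ r : R, x = r * e}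

instance (e : R) : Zero (ReT R e) := ⟨⟨0, 0, (zero_mul e).symm⟩⟩
instance (e : R) : Add (ReT R e) :=
  ⟨fun a b => ⟨a.1 + b.1, by
    obtain ⟨r, hr⟩ := a.2; obtain ⟨s, hs⟩ := b.2
    exact ⟨r + s, by rw [hr, hs, add_mul]⟩⟩⟩
instance (e : R) : Neg (ReT R e) :=
  ⟨fun a => ⟨-a.1, by obtain ⟨r, hr⟩ := a.2; exact ⟨-r, by rw [hr, neg_mul]⟩⟩⟩

instance (e : R) : AddCommGroup (ReT R e) where
  add_assoc a b c := Subtype.ext (add_assoc _ _ _)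
  zero_add a := Subtype.ext (zero_add _)
  add_zero a := Subtype.ext (add_zero _)
  neg_add_cancel a := Subtype.ext (neg_add_cancel _)
  add_comm a b := Subtype.ext (add_comm _ _)
  nsmul := nsmulRec
  zsmul := zsmulRec

instance (e : R) : LeftRMod R (ReT R e) where
  smul r a := ⟨r * a.1, by obtain ⟨s, hs⟩ := a.2; exact ⟨r * s, by rw [hs, mul_assoc]⟩⟩
  smul_add r a b := Subtype.ext (mul_add _ _ _)
  add_smul r s a := Subtype.ext (add_mul _ _ _)
  mul_smul r s a := Subtype.ext (mul_assoc _ _ _)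

/-- Finite direct sums of modules, as pi types. -/
instance {α : Type u} (M : α → Type u) [∀ j, AddCommGroup (M j)]
    [∀ j, LeftRMod R (M j)] : LeftRMod R (∀ j, M j) where
  smul r f := fun j => r • f j
  smul_add r a b := funext fun j => LeftRMod.smul_add r (a j) (b j)
  add_smul r s a := funext fun j => LeftRMod.add_smul r s (a j)
  mul_smul r s a := funext fun j => LeftRMod.mul_smul r s (a j)

variable {I : Type u} (e : I → R)

/-- The finite direct sum `⊕_{j ∈ F} Re_j`. -/
def PiRe (F : Finset I) : Type u := ∀ j : F, ReT R (e j)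

instance (F : Finset I) : AddCommGroup (PiRe R e F) :=
  inferInstanceAs (AddCommGroup (∀ j : F, ReT R (e j)))
instance (F : Finset I) : LeftRMod R (PiRe R e F) :=
  inferInstanceAs (LeftRMod R (∀ j : F, ReT R (e j)))

/-- A subset `S` of a module `M` is a finitely presented subobject: there is an exact
sequence `⊕_{j∈F₁} Re_j → ⊕_{j∈F₂} Re_j → M` whose image is `S`. -/
def PresentedSub {M : Type u} [AddCommGroup M] [LeftRMod R M] (S : Set M) : Prop :=
  ∃ (F₁ F₂ : Finset I) (φ : RLin R (PiRe R e F₁) (PiRe R e F₂))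
    (π : RLin R (PiRe R e F₂) M),
    Set.range π.toFun = S ∧ ∀ y, π.toFun y = 0 ↔ ∃ x, φ.toFun x = y

/-- A module `X` is finitely presented: there is an exact sequence
`⊕_{j∈F₁} Re_j → ⊕_{j∈F₂} Re_j → X → 0`. -/
def FinPresented (X : Type u) [AddCommGroup X] [LeftRMod R X] : Prop :=
  PresentedSub R e (Set.univ : Set X)

/-- A subset `S` of a module `M` is a finitely generated subobject: it is the image of
some finite direct sum `⊕_{j∈F} Re_j`. -/
def FGSub {M : Type u} [AddCommGroup M] [LeftRMod R M] (S : Set M) : Prop :=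
  ∃ (F : Finset I) (π : RLin R (PiRe R e F) M), Set.range π.toFun = S

/-!
A nonzero submodule `S ≤ X` contains some `x ≠ 0`. As `X` is unitary, `x` has a local unit
`∑_{j ∈ F} e_j`, so the cyclic submodule `Rx` is the image of `⊕_{j ∈ F} Re_j` and contains `x`.
By local coherence `Rx` is finitely presented, so simplicity among finitely presented
submodules forces `Rx = X`, whence `S = X`.
-/

namespace LeftRMod

variable {R} {M : Type u} [AddCommGroup M] [LeftRMod R M]

def smulRight (m : M) : R →+ M :=
  AddMonoidHom.mk' (· • m) fun r s => LeftRMod.add_smul r s m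

def smulLeft (r : R) : M →+ M :=
  AddMonoidHom.mk' (r • ·) (LeftRMod.smul_add r)

theorem zero_smul (m : M) : (0 : R) • m = 0 :=
  (smulRight m).map_zero

theorem neg_smul (r : R) (m : M) : (-r) • m = -(r • m) :=
  (smulRight m).map_neg r

theorem sum_smul {α : Type*} (s : Finset α) (f : α → R) (m : M) :
    (∑ i ∈ s, f i) • m = ∑ i ∈ s, f i • m :=
  map_sum (smulRight m) f s

theorem smul_sum {α : Type*} (s : Finset α) (r : R) (g : α → M) :
    r • (∑ i ∈ s, g i) = ∑ i ∈ s, r • g i :=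
  map_sum (smulLeft r) g s

end LeftRMod

section LocalUnits

variable {R} {M : Type u} [AddCommGroup M] [LeftRMod R M]

/-- For `k ∉ s`, orthogonality gives `e k * r = e k * ∑_{j ∈ s} e j * r = 0`. -/
theorem sum_idempotent_mul_eq_of_subset (orth : ∀ i j, i ≠ j → e i * e j = 0) {r : R}
    {s F : Finset I} (hsF : s ⊆ F) (hs : ∑ i ∈ s, e i * r = r) :
    ∑ i ∈ F, e i * r = r := by
  rw [← Finset.sum_subset hsF fun k _ hk => ?_, hs]
  rw [← hs, Finset.mul_sum]
  refine Finset.sum_eq_zero fun j hj => ?_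
  rw [← mul_assoc, orth k j (ne_of_mem_of_not_mem hj hk).symm, zero_mul]

theorem IsUnitary.exists_sum_smul_eq (orth : ∀ i j, i ≠ j → e i * e j = 0)
    (complete : ∀ r : R, ∃ s : Finset I, ∑ i ∈ s, e i * r = r)
    (hM : IsUnitary R M) (m : M) : ∃ F : Finset I, (∑ j ∈ F, e j) • m = m := by
  classical
  obtain ⟨n, r, x, rfl⟩ := hM m
  choose s hs using fun i => complete (r i)
  refine ⟨Finset.univ.biUnion s, ?_⟩
  rw [LeftRMod.smul_sum]
  refine Finset.sum_congr rfl fun i _ => ?_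
  have hr : (∑ j ∈ Finset.univ.biUnion s, e j) * r i = r i := by
    rw [Finset.sum_mul]
    exact sum_idempotent_mul_eq_of_subset e orth
      (Finset.subset_biUnion_of_mem s (Finset.mem_univ i)) (hs i)
  rw [← LeftRMod.mul_smul, hr]

end LocalUnits

section Cyclic

variable {R} {M : Type u} [AddCommGroup M] [LeftRMod R M]

theorem isSubMod_range_smul (x : M) : IsSubMod R (Set.range (· • x : R → M)) :=
  ⟨⟨0, LeftRMod.zero_smul x⟩,
    by rintro _ ⟨r, rfl⟩ _ ⟨s, rfl⟩; exact ⟨r + s, LeftRMod.add_smul r s x⟩,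
    by rintro _ ⟨r, rfl⟩; exact ⟨-r, LeftRMod.neg_smul r x⟩,
    by rintro r _ ⟨s, rfl⟩; exact ⟨r * s, LeftRMod.mul_smul r s x⟩⟩

theorem range_smul_subset {S : Set M} (hS : IsSubMod R S) {x : M} (hx : x ∈ S) :
    Set.range (· • x : R → M) ⊆ S := by
  rintro _ ⟨r, rfl⟩
  exact hS.2.2.2 r x hx

def sumSmulLin (F : Finset I) (x : M) : RLin R (PiRe R e F) M where
  toFun a := ∑ j, (a j).1 • x
  map_add a b := by
    change ∑ j, ((a j).1 + (b j).1) • x = _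
    simp only [LeftRMod.add_smul, Finset.sum_add_distrib]
  map_smul r a := by
    change ∑ j, (r * (a j).1) • x = _
    simp only [LeftRMod.mul_smul, ← LeftRMod.smul_sum]

theorem range_sumSmulLin {F : Finset I} {x : M} (hF : (∑ j ∈ F, e j) • x = x) :
    Set.range (sumSmulLin e F x).toFun = Set.range (· • x : R → M) := by
  ext y
  constructor
  · rintro ⟨a, rfl⟩
    exact ⟨∑ j, (a j).1, LeftRMod.sum_smul _ _ x⟩
  · rintro ⟨r, rfl⟩
    refine ⟨fun j => ⟨r * e j, r, rfl⟩, ?_⟩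
    change ∑ j : F, (r * e j) • x = r • x
    simp only [LeftRMod.mul_smul, ← LeftRMod.smul_sum, ← LeftRMod.sum_smul,
      Finset.sum_coe_sort F e, hF]

theorem fgSub_range_smul {F : Finset I} {x : M} (hF : (∑ j ∈ F, e j) • x = x) :
    FGSub R e (Set.range (· • x : R → M)) :=
  ⟨F, sumSmulLin e F x, range_sumSmulLin e hF⟩

end Cyclic

theorem statement7
    (orth : ∀ i j, i ≠ j → e i * e j = 0)
    (complete : ∀ r : R, ∃ s : Finset I,
      (∑ i ∈ s, e i * r) = r ∧ (∑ i ∈ s, r * e i) = r)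
    (loccoh : ∀ (M : Type u) [AddCommGroup M] [LeftRMod R M], IsUnitary R M →
      FinPresented R e M → ∀ S : Set M, IsSubMod R S → FGSub R e S → PresentedSub R e S)
    (X : Type u) [AddCommGroup X] [LeftRMod R X]
    (hXu : IsUnitary R X) (hXfp : FinPresented R e X) :
    (Nontrivial X ∧ ∀ S : Set X, IsSubMod R S → PresentedSub R e S →
        S = {0} ∨ S = Set.univ) ↔
      (Nontrivial X ∧ ∀ S : Set X, IsSubMod R S → S = {0} ∨ S = Set.univ) := by
  refine ⟨fun ⟨hnt, hsimple⟩ => ⟨hnt, fun S hS => or_iff_not_imp_left.2 fun hS0 => ?_⟩,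
    fun ⟨hnt, hsimple⟩ => ⟨hnt, fun S hS _ => hsimple S hS⟩⟩
  obtain ⟨x, hxS, hx0⟩ := ((Set.nontrivial_iff_ne_singleton hS.1).2 hS0).exists_ne 0
  obtain ⟨F, hF⟩ :=
    hXu.exists_sum_smul_eq e orth (fun r => (complete r).imp fun _ => And.left) x
  have hRx := isSubMod_range_smul (R := R) x
  have hxRx : x ∈ Set.range (· • x : R → X) := ⟨_, hF⟩
  rcases hsimple _ hRx (loccoh X hXu hXfp _ hRx (fgSub_range_smul e hF)) with h0 | huniv
  · exact absurd (Set.mem_singleton_iff.1 (h0 ▸ hxRx)) hx0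
  · exact Set.eq_univ_of_univ_subset (huniv ▸ range_smul_subset hS hxS)
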